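/- arXiv:2602.12028 — 3 statements merged into one kernel-verified Lean document; each statement's English description precedes it below -/
import Mathlib

section
/- Let α : M_f → M_g be a continuous map between merge trees satisfying the Range-Shift property for ε. Then for every δ > 0, α ∘ i^δ = j^δ ∘ α, where i^δ and j^δ are the δ-shift maps on M_f and M_g respectively. -/
open Set

/-- An (extended) merge tree structure on a topological space `M`.
`val` is the scalar function (increasing toward the root), `anc a x` means
`a` is an ancestor of `x` (it lies on the unique monotone path from `x` to the
root), and `shift δ` is the `δ`-shift map sending a point to its unique
ancestor at function value increased by `δ`. -/
structure MergeTreeOn (M : Type) [TopologicalSpace M] where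
  val : M → ℝ
  anc : M → M → Prop
  anc_refl : ∀ x, anc x x
  anc_trans : ∀ {a b c}, anc a b → anc b c → anc a c
  anc_antisymm : ∀ {a b}, anc a b → anc b a → a = b
  anc_le : ∀ {a x}, anc a x → val x ≤ val a
  anc_unique : ∀ {x a b}, anc a x → anc b x → val a = val b → a = b
  anc_total : ∀ {x a b}, anc a x → anc b x → anc a b ∨ anc b a
  exists_anc : ∀ x t, val x ≤ t → ∃ a, anc a x ∧ val a = t
  shift : ℝ → M → M
  shift_anc : ∀ {δ : ℝ}, 0 ≤ δ → ∀ x, anc (shift δ x) x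
  shift_val : ∀ {δ : ℝ}, 0 ≤ δ → ∀ x, val (shift δ x) = val x + δ
  shift_continuous : ∀ δ : ℝ, Continuous (shift δ)
  path_of_anc : ∀ {x a}, anc a x → ∃ γ : Path x a,
      ∀ s t : unitInterval, s ≤ t → val (γ s) ≤ val (γ t)
  anc_of_path : ∀ (x a : M) (γ : Path x a),
      (∀ s t : unitInterval, s ≤ t → val (γ s) ≤ val (γ t)) → anc a x

/-- A leaf of a merge tree: a point with no proper descendants. -/
def IsLeaf {M : Type} [TopologicalSpace M] (T : MergeTreeOn M) (x : M) : Prop :=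
  ∀ y, T.anc x y → y = x

/-- `v` is the least common ancestor of `x` and `y`. -/
def IsLCA {M : Type} [TopologicalSpace M] (T : MergeTreeOn M) (v x y : M) : Prop :=
  T.anc v x ∧ T.anc v y ∧ ∀ w, T.anc w x → T.anc w y → T.anc w v

/-- `wa` is the nearest ancestor of `w` lying in the set `S`. -/
def NearestAncIn {M : Type} [TopologicalSpace M] (T : MergeTreeOn M)
    (S : Set M) (w wa : M) : Prop :=
  T.anc wa w ∧ wa ∈ S ∧ ∀ w', T.anc w' w → w' ∈ S → T.val wa ≤ T.val w'

/-- `α : M_f → M_g` is an `ε`-good map: continuous, Range-Shift,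
Ancestor-Shift and Ancestor-Closeness. -/
def IsEpsGood {Mf Mg : Type} [TopologicalSpace Mf] [TopologicalSpace Mg]
    (Tf : MergeTreeOn Mf) (Tg : MergeTreeOn Mg) (ε : ℝ) (α : Mf → Mg) : Prop :=
  Continuous α ∧
  (∀ v, Tg.val (α v) = Tf.val v + ε) ∧
  (∀ v₁ v₂, Tg.anc (α v₁) (α v₂) → Tf.anc (Tf.shift (2*ε) v₁) (Tf.shift (2*ε) v₂)) ∧
  (∀ w, w ∉ Set.range α → ∀ wa, NearestAncIn Tg (Set.range α) w wa →
    |Tg.val wa - Tg.val w| ≤ 2*ε)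


/-- a continuous Range-Shift map commutes with the δ-shift maps. -/
theorem rangeShift_commutes_with_shift {Mf Mg : Type} [TopologicalSpace Mf] [TopologicalSpace Mg]
    (Tf : MergeTreeOn Mf) (Tg : MergeTreeOn Mg)
    (α : Mf → Mg) (hcont : Continuous α) (ε : ℝ) (hε : 0 < ε)
    (hRS : ∀ x, Tg.val (α x) = Tf.val x + ε) :
    ∀ δ : ℝ, 0 < δ → ∀ x : Mf, α (Tf.shift δ x) = Tg.shift δ (α x) := by
  intro δ hδ x
  have hδ' : 0 ≤ δ := hδ.le
  obtain ⟨γ, hγ⟩ := Tf.path_of_anc (Tf.shift_anc hδ' x)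
  have hanc : Tg.anc (α (Tf.shift δ x)) (α x) := by
    refine Tg.anc_of_path _ _ (γ.map hcont) ?_
    intro s t hst
    simp only [Path.map_coe, Function.comp_apply]
    rw [hRS, hRS]
    linarith [hγ s t hst]
  have hanc2 : Tg.anc (Tg.shift δ (α x)) (α x) := Tg.shift_anc hδ' (α x)
  refine Tg.anc_unique hanc hanc2 ?_
  rw [hRS, Tf.shift_val hδ', Tg.shift_val hδ', hRS]
  ring
end

section
/- Let φ : M_f → M_g be a continuous map between merge trees satisfying the Range-Shift property with ε. Then φ satisfies the Ancestor-Shift property (φ(x') ⪰ φ(y') implies i^{2ε}(x') ⪰ i^{2ε}(y')) if and only if for any two points x, y ∈ M_f with f̃(x) = f̃(y) and φ(x) = φ(y), one has i^{2ε}(x) = i^{2ε}(y). -/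
open Set

/-- a continuous Range-Shift map satisfies Ancestor-Shift iff any
two points at the same level with the same image have the same 2ε-shift. -/
theorem ancestorShift_iff {Mf Mg : Type} [TopologicalSpace Mf] [TopologicalSpace Mg]
    (Tf : MergeTreeOn Mf) (Tg : MergeTreeOn Mg)
    (ε : ℝ) (hε : 0 < ε) (φ : Mf → Mg) (hcont : Continuous φ)
    (hRS : ∀ x, Tg.val (φ x) = Tf.val x + ε) :
    (∀ v₁ v₂ : Mf, Tg.anc (φ v₁) (φ v₂) →
        Tf.anc (Tf.shift (2*ε) v₁) (Tf.shift (2*ε) v₂)) ↔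
      (∀ x y : Mf, Tf.val x = Tf.val y → φ x = φ y →
        Tf.shift (2*ε) x = Tf.shift (2*ε) y) := by
  have h2ε : (0:ℝ) ≤ 2*ε := by linarith
  have key : ∀ a x : Mf, Tf.anc a x → Tg.anc (φ a) (φ x) := by
    intro a x hax
    obtain ⟨γ, hγ⟩ := Tf.path_of_anc hax
    refine Tg.anc_of_path (φ x) (φ a) (γ.map hcont) ?_
    intro s t hst
    simp only [Path.map_coe, Function.comp]
    rw [hRS, hRS]
    have := hγ s t hst
    linarith
  constructor
  · intro hAS x y hval hφ
    exact Tf.anc_antisymm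
      (hAS x y (hφ ▸ Tg.anc_refl _)) (hAS y x (hφ ▸ Tg.anc_refl _))
  · intro H v₁ v₂ hanc
    have hv : Tf.val v₂ ≤ Tf.val v₁ := by
      have := Tg.anc_le hanc; rw [hRS, hRS] at this; linarith
    obtain ⟨y'', hy'', hvy⟩ := Tf.exists_anc v₂ (Tf.val v₁) hv
    have hφy : φ y'' = φ v₁ := by
      apply Tg.anc_unique (key y'' v₂ hy'') hanc
      rw [hRS, hRS, hvy]
    have hsh : Tf.shift (2*ε) v₁ = Tf.shift (2*ε) y'' :=
      H v₁ y'' hvy.symm hφy.symm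
    rw [hsh]
    have h1 : Tf.anc (Tf.shift (2*ε) y'') v₂ :=
      Tf.anc_trans (Tf.shift_anc h2ε y'') hy''
    have h2 : Tf.anc (Tf.shift (2*ε) v₂) v₂ := Tf.shift_anc h2ε v₂
    rcases Tf.anc_total h1 h2 with h | h
    · exact h
    · have heq : Tf.val (Tf.shift (2*ε) y'') = Tf.val (Tf.shift (2*ε) v₂) := by
        have hle := Tf.anc_le h
        rw [Tf.shift_val h2ε, Tf.shift_val h2ε] at hle ⊢
        rw [hvy]; linarith
      rw [Tf.anc_unique h1 h2 heq]
      exact Tf.anc_refl _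
end

section
/- Let φ : M_f → M_g be a continuous map satisfying Range-Shift with ε, and suppose x' , y' ∈ M_f with φ(x') ⪰ φ(y'). Then there exists an ancestor y'' of y' with f̃(y'') = f̃(x') such that φ(y'') = φ(x'). -/
open Set

/-- if φ(x') is an ancestor of φ(y'), then some ancestor y'' of
y' at the level of x' has the same image as x'. -/
theorem exists_ancestor_same_image {Mf Mg : Type} [TopologicalSpace Mf] [TopologicalSpace Mg]
    (Tf : MergeTreeOn Mf) (Tg : MergeTreeOn Mg)
    (ε : ℝ) (hε : 0 < ε) (φ : Mf → Mg) (hcont : Continuous φ)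
    (hRS : ∀ z, Tg.val (φ z) = Tf.val z + ε)
    (x' y' : Mf) (h : Tg.anc (φ x') (φ y')) :
    ∃ y'' : Mf, Tf.anc y'' y' ∧ Tf.val y'' = Tf.val x' ∧ φ y'' = φ x' := by
  have hle : Tf.val y' ≤ Tf.val x' := by
    have := Tg.anc_le h
    rw [hRS, hRS] at this
    linarith
  obtain ⟨y'', hanc, hval⟩ := Tf.exists_anc y' (Tf.val x') hle
  obtain ⟨γ, hmono⟩ := Tf.path_of_anc hanc
  have hanc' : Tg.anc (φ y'') (φ y') := by
    refine Tg.anc_of_path (φ y') (φ y'') (γ.map hcont) (fun s t hst => ?_)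
    simp only [Path.map_coe, Function.comp_apply, hRS]
    linarith [hmono s t hst]
  refine ⟨y'', hanc, hval, Tg.anc_unique hanc' h ?_⟩
  rw [hRS, hRS, hval]
end
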